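/- arXiv:2507.17041 — 4 statements merged into one kernel-verified Lean document; each statement's English description precedes it below -/
import Mathlib

section
/- Let f(z) = ∑_{n≥1} a_f(n) q^n be a normalized Hecke eigenform of weight K and level one, so that its coefficients satisfy a_f(m)a_f(n) = ∑_{d | gcd(m,n)} a_f(mn/d²) d^{K−1}. Let χ be a Dirichlet character, ℓ ≥ 3 an integer, and s a complex number with Re(s) > ℓ + (K−1)/2. Then ∑_{n=1}^∞ a_f(n) σ_{ℓ−1,χ}(n) n^{−s} = L(f,s) · L(f,χ,s−ℓ+1) / L(2s−ℓ+2−K, χ), where σ_{ℓ−1,χ}(n) = ∑_{d | n} χ(d) d^{ℓ−1}. -/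
open Finset ArithmeticFunction LSeries
open scoped LSeries.notation

namespace TwistedAux

/-- Pullback of an arithmetic function along squaring. -/
noncomputable def sqPull (f : ArithmeticFunction ℂ) : ArithmeticFunction ℂ :=
  ⟨fun n => if n.sqrt * n.sqrt = n then f n.sqrt else 0, by simp⟩

lemma sqrt_mul_self' (u : ℕ) : Nat.sqrt (u * u) = u := by
  rw [← pow_two]; exact Nat.sqrt_eq' u

lemma sqPull_apply_sq (f : ArithmeticFunction ℂ) (u : ℕ) : sqPull f (u * u) = f u := by
  simp [sqPull, sqrt_mul_self']

lemma sqPull_apply_of_ne {f : ArithmeticFunction ℂ} {n : ℕ} (h : ¬ n.sqrt * n.sqrt = n) :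
    sqPull f n = 0 := by simp [sqPull, h]

lemma sqPull_mul (f g : ArithmeticFunction ℂ) : sqPull f * sqPull g = sqPull (f * g) := by
  ext n
  rw [mul_apply]
  by_cases hsq : n.sqrt * n.sqrt = n
  · set m := n.sqrt with hm
    have hsub : (m.divisorsAntidiagonal.image (fun q : ℕ × ℕ => (q.1 * q.1, q.2 * q.2)))
        ⊆ n.divisorsAntidiagonal := by
      intro p hp
      simp only [mem_image] at hp
      obtain ⟨q, hq, rfl⟩ := hp
      rw [Nat.mem_divisorsAntidiagonal] at hq ⊢
      refine ⟨?_, ?_⟩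
      · rw [← hsq, ← hq.1]; ring
      · rw [← hsq]; exact Nat.mul_ne_zero hq.2 hq.2
    have hvan : ∀ p ∈ n.divisorsAntidiagonal,
        p ∉ (m.divisorsAntidiagonal.image fun q : ℕ × ℕ => (q.1 * q.1, q.2 * q.2)) →
        sqPull f p.1 * sqPull g p.2 = 0 := by
      intro p hp hnot
      by_cases h1 : p.1.sqrt * p.1.sqrt = p.1
      · by_cases h2 : p.2.sqrt * p.2.sqrt = p.2
        · exfalso
          apply hnot
          rw [Nat.mem_divisorsAntidiagonal] at hp
          have hmm : (p.1.sqrt * p.2.sqrt) * (p.1.sqrt * p.2.sqrt) = m * m := by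
            rw [hsq]; rw [← hp.1]; nth_rewrite 3 [← h1]; nth_rewrite 3 [← h2]; ring
          have hme : p.1.sqrt * p.2.sqrt = m := by
            have := congrArg Nat.sqrt hmm
            rwa [sqrt_mul_self', sqrt_mul_self'] at this
          refine mem_image.mpr ⟨(p.1.sqrt, p.2.sqrt), ?_, ?_⟩
          · rw [Nat.mem_divisorsAntidiagonal]
            refine ⟨hme, ?_⟩
            intro h0
            exact hp.2 (by rw [← hsq, h0, mul_zero])
          · exact Prod.ext h1 h2
        · rw [sqPull_apply_of_ne h2, mul_zero]
      · rw [sqPull_apply_of_ne h1, zero_mul]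
    rw [← Finset.sum_subset hsub hvan]
    rw [Finset.sum_image (by
      intro x hx y hy hxy
      rw [Prod.ext_iff] at hxy
      obtain ⟨e1, e2⟩ := hxy
      exact Prod.ext (Nat.mul_self_inj.mp e1) (Nat.mul_self_inj.mp e2))]
    have : sqPull (f * g) n = (f * g) m := by
      conv_lhs => rw [← hsq]
      rw [sqPull_apply_sq]
    rw [this, mul_apply]
    exact Finset.sum_congr rfl fun q hq => by rw [sqPull_apply_sq, sqPull_apply_sq]
  · rw [sqPull_apply_of_ne hsq]
    refine Finset.sum_eq_zero fun p hp => ?_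
    by_cases h1 : p.1.sqrt * p.1.sqrt = p.1
    · by_cases h2 : p.2.sqrt * p.2.sqrt = p.2
      · exfalso
        apply hsq
        rw [Nat.mem_divisorsAntidiagonal] at hp
        have hmm : (p.1.sqrt * p.2.sqrt) * (p.1.sqrt * p.2.sqrt) = n := by
          rw [← hp.1]; nth_rewrite 3 [← h1]; nth_rewrite 3 [← h2]; ring
        rw [← hmm, sqrt_mul_self']
      · rw [sqPull_apply_of_ne h2, mul_zero]
    · rw [sqPull_apply_of_ne h1, zero_mul]

lemma sqPull_one : sqPull 1 = 1 := by
  ext n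
  rcases eq_or_ne n 1 with rfl | hn
  · simp [sqPull]
  · rw [one_apply, if_neg hn]
    by_cases h : n.sqrt * n.sqrt = n
    · have h1 : ¬ n.sqrt = 1 := fun h1 => hn (by rw [← h, h1, mul_one])
      simp [sqPull, h, one_apply, h1]
    · simp [sqPull, h]

lemma sqPull_mul_apply (f g : ArithmeticFunction ℂ) (n : ℕ) :
    (sqPull f * g) n = ∑ u ∈ {u ∈ n.divisors | u * u ∣ n}, f u * g (n / (u * u)) := by
  rw [mul_apply, Nat.sum_divisorsAntidiagonal (fun d e => sqPull f d * g e)]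
  rw [← Finset.sum_filter_of_ne (p := fun d => d.sqrt * d.sqrt = d) (by
    intro x hx hne
    by_contra h
    exact hne (by rw [sqPull_apply_of_ne h, zero_mul]))]
  refine Finset.sum_nbij' (fun d => d.sqrt) (fun u => u * u) ?_ ?_ ?_ ?_ ?_
  · intro d hd
    simp only [Finset.mem_filter, Nat.mem_divisors] at hd ⊢
    obtain ⟨⟨hdn, hn0⟩, hsq⟩ := hd
    exact ⟨⟨dvd_trans (Dvd.intro _ hsq) hdn, hn0⟩, by rw [hsq]; exact hdn⟩
  · intro u hu
    simp only [Finset.mem_filter, Nat.mem_divisors] at hu ⊢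
    obtain ⟨⟨hun, hn0⟩, huu⟩ := hu
    exact ⟨⟨huu, hn0⟩, by rw [sqrt_mul_self']⟩
  · intro d hd
    simp only [Finset.mem_filter] at hd
    exact hd.2
  · intro u hu
    exact sqrt_mul_self' u
  · intro d hd
    simp only [Finset.mem_filter] at hd
    conv_lhs => rw [← hd.2]
    rw [sqPull_apply_sq]

variable {N : ℕ} (χ : DirichletCharacter ℂ N) (a : ℕ → ℂ) (K ℓ : ℕ)

noncomputable def Af : ArithmeticFunction ℂ := ⟨fun n => if n = 0 then 0 else a n, rfl⟩

noncomputable def Bf : ArithmeticFunction ℂ :=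
  ⟨fun n => if n = 0 then 0 else χ n * a n * (n : ℂ) ^ (ℓ - 1), rfl⟩

noncomputable def cf : ArithmeticFunction ℂ :=
  ⟨fun n => if n = 0 then 0 else χ n * (n : ℂ) ^ (ℓ + K - 2), rfl⟩

noncomputable def ef : ArithmeticFunction ℂ :=
  ⟨fun n => if n = 0 then 0 else (moebius n : ℂ) * χ n * (n : ℂ) ^ (ℓ + K - 2), rfl⟩

noncomputable def Df : ArithmeticFunction ℂ :=
  ⟨fun n => a n * ∑ d ∈ n.divisors, χ d * (d : ℂ) ^ (ℓ - 1), by simp⟩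

lemma ef_mul_cf : ef χ K ℓ * cf χ K ℓ = 1 := by
  ext n
  rcases eq_or_ne n 1 with rfl | hn
  · rw [mul_apply_one]
    simp [ef, cf]
  · rw [one_apply, if_neg hn]
    rcases eq_or_ne n 0 with rfl | h0
    · rw [ArithmeticFunction.map_zero]
    · rw [mul_apply]
      have key : ∀ p ∈ n.divisorsAntidiagonal, ef χ K ℓ p.1 * cf χ K ℓ p.2
          = (moebius p.1 : ℂ) * (χ n * (n : ℂ) ^ (ℓ + K - 2)) := by
        intro p hp
        have h1 := Nat.left_ne_zero_of_mem_divisorsAntidiagonal hp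
        have h2 := Nat.right_ne_zero_of_mem_divisorsAntidiagonal hp
        rw [Nat.mem_divisorsAntidiagonal] at hp
        simp only [ef, cf, coe_mk, if_neg h1, if_neg h2]
        have hχ : χ (p.1 : ZMod N) * χ (p.2 : ZMod N) = χ (n : ZMod N) := by
          rw [← map_mul, ← Nat.cast_mul, hp.1]
        have hpow : (p.1 : ℂ) ^ (ℓ + K - 2) * (p.2 : ℂ) ^ (ℓ + K - 2)
            = (n : ℂ) ^ (ℓ + K - 2) := by
          rw [← mul_pow, ← Nat.cast_mul, hp.1]
        rw [← hχ, ← hpow]; ring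
      rw [Finset.sum_congr rfl key, ← Finset.sum_mul]
      have h := congrArg (fun f : ArithmeticFunction ℂ => f n)
        (coe_moebius_mul_coe_zeta (R := ℂ))
      simp only [mul_apply, one_apply, if_neg hn] at h
      have h' : ∑ p ∈ n.divisorsAntidiagonal, (moebius p.1 : ℂ) = 0 := by
        rw [← h]
        refine Finset.sum_congr rfl fun p hp => ?_
        have h2 := Nat.right_ne_zero_of_mem_divisorsAntidiagonal hp
        simp [intCoe_apply, natCoe_apply, zeta_apply, h2]
      rw [h', zero_mul]

lemma key_identity (hK : 1 ≤ K) (hℓ : 3 ≤ ℓ)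
    (hHecke : ∀ m n : ℕ, 1 ≤ m → 1 ≤ n →
      a m * a n = ∑ d ∈ (Nat.gcd m n).divisors, a (m * n / d ^ 2) * (d : ℂ) ^ (K - 1)) :
    Af a * Bf χ a ℓ = sqPull (cf χ K ℓ) * Df χ a ℓ := by
  ext n
  rcases eq_or_ne n 0 with rfl | h0
  · simp
  rw [mul_apply, Nat.sum_divisorsAntidiagonal' (f := fun x y => Af a x * Bf χ a ℓ y)]
  rw [sqPull_mul_apply]
  have step1 : ∀ m ∈ n.divisors, Af a (n / m) * Bf χ a ℓ m
      = ∑ d ∈ ((n / m).gcd m).divisors,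
          χ m * (m : ℂ) ^ (ℓ - 1) * (a (n / (d * d)) * (d : ℂ) ^ (K - 1)) := by
    intro m hm
    obtain ⟨hmd, -⟩ := Nat.mem_divisors.mp hm
    have hm0 : m ≠ 0 := (Nat.pos_of_mem_divisors hm).ne'
    have hq0 : n / m ≠ 0 :=
      (Nat.div_pos (Nat.le_of_dvd (Nat.pos_of_ne_zero h0) hmd) (Nat.pos_of_ne_zero hm0)).ne'
    simp only [Af, Bf, coe_mk, if_neg hm0, if_neg hq0]
    have hh := hHecke (n / m) m (Nat.one_le_iff_ne_zero.mpr hq0) (Nat.one_le_iff_ne_zero.mpr hm0)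
    rw [Nat.div_mul_cancel hmd] at hh
    calc a (n / m) * (χ (m : ZMod N) * a m * (m : ℂ) ^ (ℓ - 1))
        = χ (m : ZMod N) * (m : ℂ) ^ (ℓ - 1) * (a (n / m) * a m) := by ring
      _ = _ := by
          rw [hh, Finset.mul_sum]
          refine Finset.sum_congr rfl fun d hd => ?_
          rw [pow_two]
  rw [Finset.sum_congr rfl step1]
  have step2 : ∀ u ∈ {u ∈ n.divisors | u * u ∣ n}, cf χ K ℓ u * Df χ a ℓ (n / (u * u))
      = ∑ v ∈ (n / (u * u)).divisors,
          χ u * (u : ℂ) ^ (ℓ + K - 2) * (a (n / (u * u)) * (χ v * (v : ℂ) ^ (ℓ - 1))) := by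
    intro u hu
    simp only [Finset.mem_filter, Nat.mem_divisors] at hu
    have hu0 : u ≠ 0 := by
      rintro rfl
      exact h0 (by simpa using hu.1.1)
    simp only [cf, Df, coe_mk, if_neg hu0, Finset.mul_sum]
  rw [Finset.sum_congr rfl step2]
  rw [Finset.sum_sigma' n.divisors (fun m => ((n / m).gcd m).divisors), Finset.sum_sigma']
  refine Finset.sum_nbij' (fun p => ⟨p.2, p.1 / p.2⟩) (fun q => ⟨q.1 * q.2, q.1⟩) ?_ ?_ ?_ ?_ ?_
  · rintro ⟨m, d⟩ hp
    simp only [Finset.mem_sigma, Nat.mem_divisors, Finset.mem_filter] at hp ⊢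
    obtain ⟨⟨hmd, hn0⟩, hdg, hg0⟩ := hp
    have hd1 : d ∣ n / m := dvd_trans hdg (Nat.gcd_dvd_left _ _)
    have hd2 : d ∣ m := dvd_trans hdg (Nat.gcd_dvd_right _ _)
    have hdd : d * d ∣ n := by
      have := mul_dvd_mul hd2 hd1
      rwa [Nat.mul_div_cancel' hmd] at this
    have hmdn : m * d ∣ n := (Nat.dvd_div_iff_mul_dvd hmd).mp hd1
    refine ⟨⟨⟨dvd_trans hd2 hmd, hn0⟩, hdd⟩, ?_, ?_⟩
    · rw [Nat.dvd_div_iff_mul_dvd hdd]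
      have : d * d * (m / d) = m * d := by
        rw [mul_assoc, Nat.mul_div_cancel' hd2, mul_comm]
      rwa [this]
    · have hd0 : d ≠ 0 := by rintro rfl; exact hg0 (zero_dvd_iff.mp hdg)
      exact (Nat.div_pos (Nat.le_of_dvd (Nat.pos_of_ne_zero hn0) hdd)
        (Nat.pos_of_ne_zero (Nat.mul_ne_zero hd0 hd0))).ne'
  · rintro ⟨u, v⟩ hq
    simp only [Finset.mem_sigma, Nat.mem_divisors, Finset.mem_filter] at hq ⊢
    obtain ⟨⟨⟨hun, hn0⟩, huu⟩, hv, hq0⟩ := hq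
    have hu0 : u ≠ 0 := by rintro rfl; exact hn0 (by simpa using hun)
    have huuv : u * u * v ∣ n := (Nat.dvd_div_iff_mul_dvd huu).mp hv
    have huv : u * v ∣ n := dvd_trans ⟨u, by ring⟩ huuv
    refine ⟨⟨huv, hn0⟩, ?_, ?_⟩
    · refine Nat.dvd_gcd ?_ (dvd_mul_right u v)
      rw [Nat.dvd_div_iff_mul_dvd huv]
      rw [show u * v * u = u * u * v by ring]
      exact huuv
    · have hv0 : v ≠ 0 := by
        rintro rfl
        exact hq0 ((zero_dvd_iff).mp hv)
      rw [Ne, Nat.gcd_eq_zero_iff]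
      rintro ⟨-, h⟩
      rcases (by simpa using h : u = 0 ∨ v = 0) with h' | h'
      exacts [hu0 h', hv0 h']
  · rintro ⟨m, d⟩ hp
    simp only [Finset.mem_sigma, Nat.mem_divisors] at hp
    have hd2 : d ∣ m := dvd_trans hp.2.1 (Nat.gcd_dvd_right _ _)
    simp only [Nat.mul_div_cancel' hd2]
  · rintro ⟨u, v⟩ hq
    simp only [Finset.mem_sigma, Finset.mem_filter, Nat.mem_divisors] at hq
    have hu0 : u ≠ 0 := by
      rintro rfl
      exact hq.1.1.2 (by simpa using hq.1.1.1)
    simp only [Nat.mul_div_cancel_left v (Nat.pos_of_ne_zero hu0)]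
  · rintro ⟨m, d⟩ hp
    simp only [Finset.mem_sigma, Nat.mem_divisors] at hp
    have hd2 : d ∣ m := dvd_trans hp.2.1 (Nat.gcd_dvd_right _ _)
    have hme : d * (m / d) = m := Nat.mul_div_cancel' hd2
    have hχm : χ (d : ZMod N) * χ ((m / d : ℕ) : ZMod N) = χ (m : ZMod N) := by
      rw [← map_mul, ← Nat.cast_mul, hme]
    have hpm : ((m : ℕ) : ℂ) ^ (ℓ - 1) = (d : ℂ) ^ (ℓ - 1) * ((m / d : ℕ) : ℂ) ^ (ℓ - 1) := by
      rw [← mul_pow, ← Nat.cast_mul, hme]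
    have hpd : (d : ℂ) ^ (ℓ + K - 2) = (d : ℂ) ^ (ℓ - 1) * (d : ℂ) ^ (K - 1) := by
      rw [← pow_add]
      congr 1
      omega
    rw [← hχm, hpm, hpd]
    ring

lemma conv_one_one (n : ℕ) : ((1 : ℕ → ℂ) ⍟ (1 : ℕ → ℂ)) n = (n.divisors.card : ℂ) := by
  rw [convolution_def]
  simp only [Pi.one_apply, one_mul]
  rw [Nat.sum_divisorsAntidiagonal (fun _ _ => (1 : ℂ))]
  simp

lemma LSeriesSummable_of_divBound (f : ℕ → ℂ) (c t : ℝ) (ht : 1 < t) (s : ℂ)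
    (hb : ∀ n : ℕ, n ≠ 0 → ‖f n‖ ≤ (n.divisors.card : ℝ) * (n : ℝ) ^ c)
    (hst : c + t ≤ s.re) : LSeriesSummable f s := by
  have h1 : LSeriesSummable ((1 : ℕ → ℂ) ⍟ (1 : ℕ → ℂ)) (t : ℂ) := by
    have h := LSeriesSummable_one_iff (s := (t : ℂ))
    have h' : LSeriesSummable (1 : ℕ → ℂ) (t : ℂ) := h.mpr (by simpa using ht)
    exact h'.convolution h'
  have h2 : Summable fun n => ‖term ((1 : ℕ → ℂ) ⍟ 1) (t : ℂ) n‖ := summable_norm_iff.mpr h1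
  refine Summable.of_norm (h2.of_nonneg_of_le (fun _ => norm_nonneg _) fun n => ?_)
  rcases eq_or_ne n 0 with rfl | hn
  · simp
  have hn1 : (1 : ℝ) ≤ (n : ℝ) := by exact_mod_cast Nat.one_le_iff_ne_zero.mpr hn
  have hnpos : (0 : ℝ) < n := lt_of_lt_of_le zero_lt_one hn1
  rw [norm_term_eq, norm_term_eq, if_neg hn, if_neg hn, conv_one_one, Complex.ofReal_re,
    Complex.norm_natCast]
  calc ‖f n‖ / (n : ℝ) ^ s.re ≤ ((n.divisors.card : ℝ) * (n : ℝ) ^ c) / (n : ℝ) ^ s.re := by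
        gcongr
        exact hb n hn
    _ = (n.divisors.card : ℝ) * (n : ℝ) ^ (c - s.re) := by
        rw [Real.rpow_sub hnpos]; ring
    _ ≤ (n.divisors.card : ℝ) * (n : ℝ) ^ (-t) := by
        gcongr
        linarith
    _ = (n.divisors.card : ℝ) / (n : ℝ) ^ t := by
        rw [Real.rpow_neg hnpos.le]; ring

lemma LSeriesSummable_sqPull (g : ArithmeticFunction ℂ) (c : ℝ) (s : ℂ)
    (hb : ∀ u : ℕ, u ≠ 0 → ‖g u‖ ≤ (u : ℝ) ^ c) (hst : c + 1 < 2 * s.re) :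
    LSeriesSummable (fun n => sqPull g n) s := by
  have hinj : Function.Injective (fun u : ℕ => u * u) := fun x y h =>
    Nat.mul_self_inj.mp h
  have hvan : ∀ x ∉ Set.range (fun u : ℕ => u * u),
      term (fun n => sqPull g n) s x = 0 := by
    intro x hx
    rcases eq_or_ne x 0 with rfl | hx0
    · simp
    · rw [term_of_ne_zero hx0]
      rw [sqPull_apply_of_ne (fun h => hx ⟨x.sqrt, h⟩), zero_div]
  refine (Function.Injective.summable_iff hinj hvan).mp ?_
  refine Summable.of_norm ?_
  have hsum : Summable (fun u : ℕ => (u : ℝ) ^ (c - 2 * s.re)) :=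
    Real.summable_nat_rpow.mpr (by linarith)
  refine hsum.of_nonneg_of_le (fun _ => norm_nonneg _) fun u => ?_
  rcases eq_or_ne u 0 with rfl | hu
  · simp [Real.zero_rpow (show c - 2 * s.re ≠ 0 by linarith)]
  have hu1 : (1 : ℝ) ≤ (u : ℝ) := by exact_mod_cast Nat.one_le_iff_ne_zero.mpr hu
  have hupos : (0 : ℝ) < u := lt_of_lt_of_le zero_lt_one hu1
  have h0 : u * u ≠ 0 := Nat.mul_ne_zero hu hu
  show ‖term (fun n => sqPull g n) s (u * u)‖ ≤ _
  rw [norm_term_eq, if_neg h0, sqPull_apply_sq]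
  have hden : ((u * u : ℕ) : ℝ) ^ s.re = (u : ℝ) ^ (2 * s.re) := by
    have : ((u * u : ℕ) : ℝ) = (u : ℝ) ^ (2 : ℕ) := by push_cast; ring
    rw [this, ← Real.rpow_natCast ((u : ℝ)) 2, ← Real.rpow_mul hupos.le]
    norm_num
  rw [hden]
  calc ‖g u‖ / (u : ℝ) ^ (2 * s.re) ≤ (u : ℝ) ^ c / (u : ℝ) ^ (2 * s.re) := by
        gcongr
        exact hb u hu
    _ = (u : ℝ) ^ (c - 2 * s.re) := by rw [Real.rpow_sub hupos]

lemma tsum_pnat_term (F : ℕ → ℂ) (s : ℂ) :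
    ∑' n : ℕ+, term F s (n : ℕ) = LSeries F s := by
  refine Function.Injective.tsum_eq (g := ((↑) : ℕ+ → ℕ)) PNat.coe_injective ?_
  intro x hx
  have hx0 : x ≠ 0 := by
    rintro rfl
    simp [Function.mem_support] at hx
  exact ⟨⟨x, Nat.pos_of_ne_zero hx0⟩, rfl⟩

end TwistedAux

open TwistedAux in
/-- For a normalized Hecke eigenform of weight `K` and level one (encoded by the Hecke
multiplicativity relation of its coefficients and the Deligne bound), a Dirichlet character `χ`,
an integer `ℓ ≥ 3` and `s` with `Re(s) > ℓ + (K−1)/2`,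
`∑_{n≥1} a_f(n) σ_{ℓ−1,χ}(n) n^{−s} = L(f,s) L(f,χ,s−ℓ+1) / L(2s−ℓ+2−K, χ)`. -/
theorem twisted_divisor_dirichlet_series (K : ℕ) (hK : 1 ≤ K) (N : ℕ)
    (χ : DirichletCharacter ℂ N) (a : ℕ → ℂ) (ha1 : a 1 = 1)
    (hHecke : ∀ m n : ℕ, 1 ≤ m → 1 ≤ n →
      a m * a n = ∑ d ∈ (Nat.gcd m n).divisors, a (m * n / d ^ 2) * (d : ℂ) ^ (K - 1))
    (hDeligne : ∀ n : ℕ, 1 ≤ n →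
      ‖a n‖ ≤ (n.divisors.card : ℝ) * (n : ℝ) ^ (((K : ℝ) - 1) / 2))
    (ℓ : ℕ) (hℓ : 3 ≤ ℓ) (s : ℂ) (hs : (ℓ : ℝ) + ((K : ℝ) - 1) / 2 < s.re) :
    ∑' n : ℕ+, a (n : ℕ)
        * (∑ d ∈ (n : ℕ).divisors, χ ((d : ℕ) : ZMod N) * (d : ℂ) ^ (ℓ - 1))
        / ((n : ℕ) : ℂ) ^ s
      = (∑' n : ℕ+, a (n : ℕ) / ((n : ℕ) : ℂ) ^ s)
          * (∑' n : ℕ+, χ ((n : ℕ) : ZMod N) * a (n : ℕ)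
              / ((n : ℕ) : ℂ) ^ (s - (ℓ : ℂ) + 1))
          / (∑' n : ℕ+, χ ((n : ℕ) : ZMod N)
              / ((n : ℕ) : ℂ) ^ (2 * s - (ℓ : ℂ) + 2 - (K : ℂ))) := by
  have hℓR : (3 : ℝ) ≤ (ℓ : ℝ) := by exact_mod_cast hℓ
  have hKR : (1 : ℝ) ≤ (K : ℝ) := by exact_mod_cast hK
  have hℓ1 : ((ℓ - 1 : ℕ) : ℝ) = (ℓ : ℝ) - 1 := by
    push_cast [Nat.cast_sub (show 1 ≤ ℓ by omega)]; ring
  have hβ : ((ℓ + K - 2 : ℕ) : ℝ) = (ℓ : ℝ) + (K : ℝ) - 2 := by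
    push_cast [Nat.cast_sub (show 2 ≤ ℓ + K by omega)]; ring
  -- summability of the four L-series
  have hSA : LSeriesSummable (fun n => Af a n) s := by
    refine LSeriesSummable_of_divBound _ (((K : ℝ) - 1) / 2) (s.re - ((K : ℝ) - 1) / 2)
      (by linarith) s ?_ (by linarith)
    intro n hn
    simpa [Af, coe_mk, if_neg hn] using hDeligne n (Nat.one_le_iff_ne_zero.mpr hn)
  have hSB : LSeriesSummable (fun n => Bf χ a ℓ n) s := by
    refine LSeriesSummable_of_divBound _ (((K : ℝ) - 1) / 2 + ((ℓ - 1 : ℕ) : ℝ))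
      (s.re - (((K : ℝ) - 1) / 2 + ((ℓ - 1 : ℕ) : ℝ))) (by rw [hℓ1]; linarith) s ?_ (by linarith)
    intro n hn
    have hn1 : (1 : ℝ) ≤ (n : ℝ) := by exact_mod_cast Nat.one_le_iff_ne_zero.mpr hn
    have hnpos : (0 : ℝ) < (n : ℝ) := lt_of_lt_of_le zero_lt_one hn1
    have h3 : ‖((n : ℕ) : ℂ) ^ (ℓ - 1)‖ = (n : ℝ) ^ ((ℓ - 1 : ℕ)) := by
      rw [norm_pow, Complex.norm_natCast]
    calc ‖Bf χ a ℓ n‖ = ‖χ (n : ZMod N)‖ * ‖a n‖ * (n : ℝ) ^ ((ℓ - 1 : ℕ)) := by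
          simp only [Bf, coe_mk, if_neg hn]
          rw [norm_mul, norm_mul, h3]
      _ ≤ 1 * ((n.divisors.card : ℝ) * (n : ℝ) ^ (((K : ℝ) - 1) / 2)) * (n : ℝ) ^ ((ℓ - 1 : ℕ)) := by
          gcongr
          · exact DirichletCharacter.norm_le_one χ _
          · exact hDeligne n (Nat.one_le_iff_ne_zero.mpr hn)
      _ = (n.divisors.card : ℝ) * (n : ℝ) ^ (((K : ℝ) - 1) / 2 + ((ℓ - 1 : ℕ) : ℝ)) := by
          rw [one_mul, mul_assoc, ← Real.rpow_natCast ((n : ℝ)) (ℓ - 1),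
            ← Real.rpow_add hnpos]
  have hSC : LSeriesSummable (fun n => sqPull (cf χ K ℓ) n) s := by
    refine LSeriesSummable_sqPull _ (((ℓ + K - 2 : ℕ)) : ℝ) s ?_ (by rw [hβ]; linarith)
    intro u hu
    have h3 : ‖((u : ℕ) : ℂ) ^ (ℓ + K - 2)‖ = (u : ℝ) ^ (((ℓ + K - 2 : ℕ)) : ℝ) := by
      rw [norm_pow, Complex.norm_natCast, Real.rpow_natCast]
    calc ‖cf χ K ℓ u‖ = ‖χ (u : ZMod N)‖ * (u : ℝ) ^ (((ℓ + K - 2 : ℕ)) : ℝ) := by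
          simp only [cf, coe_mk, if_neg hu]
          rw [norm_mul, h3]
      _ ≤ 1 * (u : ℝ) ^ (((ℓ + K - 2 : ℕ)) : ℝ) := by
          gcongr
          exact DirichletCharacter.norm_le_one χ _
      _ = _ := one_mul _
  have hSE : LSeriesSummable (fun n => sqPull (ef χ K ℓ) n) s := by
    refine LSeriesSummable_sqPull _ (((ℓ + K - 2 : ℕ)) : ℝ) s ?_ (by rw [hβ]; linarith)
    intro u hu
    have h3 : ‖((u : ℕ) : ℂ) ^ (ℓ + K - 2)‖ = (u : ℝ) ^ (((ℓ + K - 2 : ℕ)) : ℝ) := by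
      rw [norm_pow, Complex.norm_natCast, Real.rpow_natCast]
    have hμ : ‖((moebius u : ℤ) : ℂ)‖ ≤ 1 := by
      rcases moebius_eq_or u with h | h | h <;> simp [h]
    calc ‖ef χ K ℓ u‖
        = ‖((moebius u : ℤ) : ℂ)‖ * ‖χ (u : ZMod N)‖ * (u : ℝ) ^ (((ℓ + K - 2 : ℕ)) : ℝ) := by
          simp only [ef, coe_mk, if_neg hu]
          rw [norm_mul, norm_mul, h3]
      _ ≤ 1 * 1 * (u : ℝ) ^ (((ℓ + K - 2 : ℕ)) : ℝ) := by
          gcongr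
          exact DirichletCharacter.norm_le_one χ _
      _ = _ := by rw [one_mul, one_mul]
  -- the algebraic identities
  have hkey := key_identity χ a K ℓ hK hℓ hHecke
  have hEC : sqPull (ef χ K ℓ) * sqPull (cf χ K ℓ) = 1 := by
    rw [sqPull_mul, ef_mul_cf, sqPull_one]
  have hDeq : Df χ a ℓ = sqPull (ef χ K ℓ) * (Af a * Bf χ a ℓ) := by
    rw [hkey, ← mul_assoc, hEC, one_mul]
  have hSAB : LSeriesSummable (fun n => (Af a * Bf χ a ℓ) n) s :=
    ArithmeticFunction.LSeriesSummable_mul hSA hSB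
  have hTEC : LSeries (fun n => sqPull (ef χ K ℓ) n) s
      * LSeries (fun n => sqPull (cf χ K ℓ) n) s = 1 := by
    rw [← ArithmeticFunction.LSeries_mul' hSE hSC, hEC]
    have h1 : (fun n => (1 : ArithmeticFunction ℂ) n) = LSeries.delta := by
      funext n
      simp [one_apply, LSeries.delta]
    rw [h1, LSeries_delta, Pi.one_apply]
  have hTD : LSeries (fun n => Df χ a ℓ n) s
      = LSeries (fun n => sqPull (ef χ K ℓ) n) s
        * (LSeries (fun n => Af a n) s * LSeries (fun n => Bf χ a ℓ n) s) := by
    rw [hDeq, ArithmeticFunction.LSeries_mul' hSE hSAB,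
      ArithmeticFunction.LSeries_mul' hSA hSB]
  have hTC0 : LSeries (fun n => sqPull (cf χ K ℓ) n) s ≠ 0 :=
    right_ne_zero_of_mul_eq_one hTEC
  -- identification of the goal's sums with L-series
  have hconvD : ∑' n : ℕ+, a (n : ℕ)
        * (∑ d ∈ (n : ℕ).divisors, χ ((d : ℕ) : ZMod N) * (d : ℂ) ^ (ℓ - 1))
        / ((n : ℕ) : ℂ) ^ s = LSeries (fun n => Df χ a ℓ n) s := by
    rw [← tsum_pnat_term]
    refine tsum_congr fun n => ?_
    have hn : (n : ℕ) ≠ 0 := n.pos.ne'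
    rw [term_of_ne_zero hn]
    simp only [Df, coe_mk]
  have hconvA : (∑' n : ℕ+, a (n : ℕ) / ((n : ℕ) : ℂ) ^ s)
      = LSeries (fun n => Af a n) s := by
    rw [← tsum_pnat_term]
    refine tsum_congr fun n => ?_
    have hn : (n : ℕ) ≠ 0 := n.pos.ne'
    rw [term_of_ne_zero hn]
    simp only [Af, coe_mk, if_neg hn]
  have hconvB : (∑' n : ℕ+, χ ((n : ℕ) : ZMod N) * a (n : ℕ)
        / ((n : ℕ) : ℂ) ^ (s - (ℓ : ℂ) + 1)) = LSeries (fun n => Bf χ a ℓ n) s := by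
    rw [← tsum_pnat_term]
    refine tsum_congr fun n => ?_
    have hn : (n : ℕ) ≠ 0 := n.pos.ne'
    have hc : ((n : ℕ) : ℂ) ≠ 0 := Nat.cast_ne_zero.mpr hn
    have hP : ((n : ℕ) : ℂ) ^ (ℓ - 1) ≠ 0 := pow_ne_zero _ hc
    rw [term_of_ne_zero hn]
    simp only [Bf, coe_mk, if_neg hn]
    have hsplit : ((n : ℕ) : ℂ) ^ s
        = ((n : ℕ) : ℂ) ^ (s - (ℓ : ℂ) + 1) * ((n : ℕ) : ℂ) ^ (ℓ - 1) := by
      rw [← Complex.cpow_natCast (((n : ℕ) : ℂ)) (ℓ - 1), ← Complex.cpow_add _ _ hc]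
      congr 1
      push_cast [Nat.cast_sub (show 1 ≤ ℓ by omega)]
      ring
    rw [hsplit, mul_div_mul_right _ _ hP]
  have hconvC : (∑' n : ℕ+, χ ((n : ℕ) : ZMod N)
        / ((n : ℕ) : ℂ) ^ (2 * s - (ℓ : ℂ) + 2 - (K : ℂ)))
      = LSeries (fun n => sqPull (cf χ K ℓ) n) s := by
    have hinj : Function.Injective (fun u : ℕ+ => (u : ℕ) * (u : ℕ)) := fun x y h =>
      PNat.coe_injective (Nat.mul_self_inj.mp h)
    have hsupp : Function.support (fun x => term (fun k => sqPull (cf χ K ℓ) k) s x)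
        ⊆ Set.range (fun u : ℕ+ => (u : ℕ) * (u : ℕ)) := by
      intro x hx
      have hx0 : x ≠ 0 := by
        rintro rfl
        simp [Function.mem_support] at hx
      have hsq : x.sqrt * x.sqrt = x := by
        by_contra h
        apply hx
        show term _ s x = 0
        rw [term_of_ne_zero hx0, sqPull_apply_of_ne h, zero_div]
      have hs0 : x.sqrt ≠ 0 := by
        intro h
        exact hx0 (by rw [← hsq, h, mul_zero])
      exact ⟨⟨x.sqrt, Nat.pos_of_ne_zero hs0⟩, hsq⟩
    have h1 : ∑' (c : ℕ+), term (fun k => sqPull (cf χ K ℓ) k) s ((c : ℕ) * (c : ℕ))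
        = LSeries (fun k => sqPull (cf χ K ℓ) k) s :=
      Function.Injective.tsum_eq hinj hsupp
    rw [← h1]
    refine tsum_congr fun u => ?_
    have hu : (u : ℕ) ≠ 0 := u.pos.ne'
    have hc : ((u : ℕ) : ℂ) ≠ 0 := Nat.cast_ne_zero.mpr hu
    have h0 : (u : ℕ) * (u : ℕ) ≠ 0 := Nat.mul_ne_zero hu hu
    have hP : ((u : ℕ) : ℂ) ^ (ℓ + K - 2) ≠ 0 := pow_ne_zero _ hc
    rw [term_of_ne_zero h0, sqPull_apply_sq]
    simp only [cf, coe_mk, if_neg hu]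
    have hden : (((u : ℕ) * (u : ℕ) : ℕ) : ℂ) ^ s = ((u : ℕ) : ℂ) ^ s * ((u : ℕ) : ℂ) ^ s := by
      push_cast
      exact Complex.natCast_mul_natCast_cpow u u s
    have hkey2 : ((u : ℕ) : ℂ) ^ s * ((u : ℕ) : ℂ) ^ s
        = ((u : ℕ) : ℂ) ^ (2 * s - (ℓ : ℂ) + 2 - (K : ℂ)) * ((u : ℕ) : ℂ) ^ (ℓ + K - 2) := by
      rw [← Complex.cpow_natCast (((u : ℕ) : ℂ)) (ℓ + K - 2), ← Complex.cpow_add _ _ hc,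
        ← Complex.cpow_add _ _ hc]
      congr 1
      push_cast [Nat.cast_sub (show 2 ≤ ℓ + K by omega)]
      ring
    rw [hden, hkey2, mul_div_mul_right _ _ hP]
  rw [hconvD, hconvA, hconvB, hconvC, hTD, eq_div_iff hTC0]
  linear_combination (LSeries (fun n => Af a n) s * LSeries (fun n => Bf χ a ℓ n) s) * hTEC
end

section
/- Let τ be any permutation of {1,...,n} and 2 ≤ ℓ₁ < ℓ₂ < ... < ℓₙ integers. Then the product ∏_{i=1}^n 2^{τ(i)−1} σ_{ℓ_i−1}(2^{τ(i)−1}) attains its maximum over all permutations τ exactly when τ is the identity permutation. -/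
open Finset

private def Sfun (k a : ℕ) : ℕ := ∑ m ∈ Finset.range (a + 1), 2 ^ (k * m)

private lemma Sfun_pos (k a : ℕ) : 0 < Sfun k a :=
  Finset.sum_pos (fun m _ => pow_pos (by norm_num) _) ⟨0, by simp⟩

private lemma Sfun_supermod {k l a b : ℕ} (hkl : k < l) (hab : a < b) :
    Sfun k b * Sfun l a < Sfun k a * Sfun l b := by
  have h1 : a + 1 ≤ b + 1 := by omega
  have hsplit : ∀ g : ℕ → ℕ, ∑ m ∈ range (b+1), g m
      = (∑ m ∈ range (a+1), g m) + ∑ m ∈ Ico (a+1) (b+1), g m := by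
    intro g
    rw [range_eq_Ico, range_eq_Ico]
    exact (Finset.sum_Ico_consecutive g (Nat.zero_le _) h1).symm
  unfold Sfun
  rw [hsplit (fun m => 2 ^ (k * m)), hsplit (fun m => 2 ^ (l * m)), add_mul, mul_add]
  refine Nat.add_lt_add_left ?_ _
  rw [Finset.sum_mul_sum, mul_comm, Finset.sum_mul_sum]
  refine Finset.sum_lt_sum_of_nonempty (by simp; omega) ?_
  intro p hp
  rw [Finset.mem_Ico] at hp
  refine Finset.sum_lt_sum_of_nonempty ⟨0, by simp⟩ ?_
  intro q hq
  rw [Finset.mem_range] at hq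
  have hqp : q < p := by omega
  rw [← pow_add, ← pow_add]
  refine Nat.pow_lt_pow_right (by norm_num) ?_
  have h2 : k * p + l * q + (l - k) * (p - q) = l * p + k * q := by
    rcases Nat.exists_eq_add_of_lt hkl with ⟨d, rfl⟩
    rcases Nat.exists_eq_add_of_lt hqp with ⟨e, rfl⟩
    have h3 : k + d + 1 - k = d + 1 := by omega
    have h4 : q + e + 1 - q = e + 1 := by omega
    rw [h3, h4]; ring
  have hpos' : 0 < (l - k) * (p - q) := Nat.mul_pos (by omega) (by omega)
  omega

private def invSet {n : ℕ} (τ : Equiv.Perm (Fin n)) : Finset (Fin n × Fin n) :=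
  Finset.univ.filter (fun p => p.1 < p.2 ∧ τ p.2 < τ p.1)

private lemma perm_eq_one {n : ℕ} (τ : Equiv.Perm (Fin n)) (h : StrictMono τ) : τ = 1 := by
  have h2 : StrictMono ⇑τ.symm := by
    intro a b hab
    by_contra hc
    push_neg at hc
    have := h.monotone hc
    simp only [Equiv.apply_symm_apply] at this
    exact absurd this hab.not_ge
  have hwf : WellFoundedLT (Fin n) := inferInstance
  refine Equiv.ext fun i => ?_
  have ha : i ≤ τ i := h.le_apply
  have hb : τ i ≤ τ.symm (τ i) := h2.le_apply
  rw [Equiv.symm_apply_apply] at hb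
  exact le_antisymm hb ha

private lemma exists_adj {n : ℕ} (τ : Equiv.Perm (Fin n)) (hτ : τ ≠ 1) :
    ∃ c s : Fin n, (c : ℕ) + 1 = (s : ℕ) ∧ τ s < τ c := by
  by_contra h
  push_neg at h
  refine hτ (perm_eq_one τ ?_)
  have claim : ∀ d : ℕ, ∀ i j : Fin n, (i : ℕ) + d + 1 = (j : ℕ) → τ i < τ j := by
    intro d
    induction d with
    | zero =>
      intro i j hij
      refine lt_of_le_of_ne (h i j (by omega)) fun heq => ?_
      have := congrArg Fin.val (τ.injective heq)
      omega
    | succ d ihd =>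
      intro i j hij
      have hmlt : (i : ℕ) + d + 1 < n := by have := j.isLt; omega
      refine lt_trans (ihd i ⟨(i : ℕ) + d + 1, hmlt⟩ rfl) ?_
      refine lt_of_le_of_ne (h _ j (by simp; omega)) fun heq => ?_
      have := congrArg Fin.val (τ.injective heq)
      simp at this
      omega
  intro i j hij
  rw [Fin.lt_def] at hij
  exact claim ((j : ℕ) - (i : ℕ) - 1) i j (by omega)

private lemma invSet_empty_eq_one {n : ℕ} (τ : Equiv.Perm (Fin n)) (h : invSet τ = ∅) :
    τ = 1 := by
  refine perm_eq_one τ fun i j hij => ?_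
  have hne : (i, j) ∉ invSet τ := h ▸ Finset.notMem_empty _
  simp only [invSet, Finset.mem_filter, Finset.mem_univ, true_and, not_and, not_lt] at hne
  refine lt_of_le_of_ne (hne hij) fun heq => ?_
  have := congrArg Fin.val (τ.injective heq)
  rw [Fin.lt_def] at hij
  omega

private lemma invSet_card_lt {n : ℕ} (τ : Equiv.Perm (Fin n)) (c s : Fin n)
    (hcs : (c : ℕ) + 1 = (s : ℕ)) (hts : τ s < τ c) :
    (invSet (τ * Equiv.swap c s)).card < (invSet τ).card := by
  set w := Equiv.swap c s with hw
  have hcs' : c < s := by rw [Fin.lt_def]; omega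
  have hmem : (c, s) ∈ invSet τ := by simp [invSet, hcs', hts]
  have hmaps : ∀ p ∈ invSet (τ * w), (w p.1, w p.2) ∈ (invSet τ).erase (c, s) := by
    rintro ⟨x, y⟩ hp
    simp only [invSet, Finset.mem_filter, Finset.mem_univ, true_and] at hp
    obtain ⟨hxy, h1⟩ := hp
    rw [Equiv.Perm.mul_apply, Equiv.Perm.mul_apply] at h1
    have hne : ¬(x = c ∧ y = s) := by
      rintro ⟨rfl, rfl⟩
      rw [hw, Equiv.swap_apply_left, Equiv.swap_apply_right] at h1
      exact absurd h1 hts.asymm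
    have vne : ∀ u v : Fin n, u ≠ v → (u : ℕ) ≠ (v : ℕ) := fun u v h hh => h (Fin.ext hh)
    have hwlt : w x < w y := by
      rcases eq_or_ne x c with rfl | hxc
      · rcases eq_or_ne y s with rfl | hys
        · exact absurd ⟨rfl, rfl⟩ hne
        · have hyc : y ≠ x := (Fin.lt_def.1 hxy).ne' ∘ congrArg Fin.val
          rw [hw, Equiv.swap_apply_left, Equiv.swap_apply_of_ne_of_ne hyc hys]
          have := vne _ _ hys
          rw [Fin.lt_def] at hxy ⊢
          omega
      · rcases eq_or_ne x s with rfl | hxs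
        · have hyx : y ≠ x := (Fin.lt_def.1 hxy).ne' ∘ congrArg Fin.val
          have hyc : y ≠ c := by
            intro hh
            have := congrArg Fin.val hh
            rw [Fin.lt_def] at hxy
            omega
          rw [hw, Equiv.swap_apply_right, Equiv.swap_apply_of_ne_of_ne hyc hyx]
          rw [Fin.lt_def] at hxy ⊢
          omega
        · rcases eq_or_ne y c with rfl | hyc
          · rw [hw, Equiv.swap_apply_of_ne_of_ne hxc hxs, Equiv.swap_apply_left]
            rw [Fin.lt_def] at hxy ⊢
            omega
          · rcases eq_or_ne y s with rfl | hys
            · rw [hw, Equiv.swap_apply_of_ne_of_ne hxc hxs, Equiv.swap_apply_right]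
              have := vne _ _ hxc
              rw [Fin.lt_def] at hxy ⊢
              omega
            · rw [hw, Equiv.swap_apply_of_ne_of_ne hxc hxs,
                Equiv.swap_apply_of_ne_of_ne hyc hys]
              exact hxy
    refine Finset.mem_erase.2 ⟨fun heq => ?_, ?_⟩
    · rw [Prod.ext_iff] at heq
      have hx : x = s := by
        have := congrArg w heq.1
        rwa [hw, Equiv.swap_apply_self, Equiv.swap_apply_left] at this
      have hy : y = c := by
        have := congrArg w heq.2
        rwa [hw, Equiv.swap_apply_self, Equiv.swap_apply_right] at this
      rw [hx, hy, Fin.lt_def] at hxy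
      omega
    · simp [invSet, hwlt, h1]
  have hinj : Set.InjOn (fun p : Fin n × Fin n => (w p.1, w p.2)) (invSet (τ * w)) := by
    intro p _ q _ hpq
    rw [Prod.ext_iff] at hpq
    exact Prod.ext (w.injective hpq.1) (w.injective hpq.2)
  have hcard : (invSet (τ * w)).card ≤ ((invSet τ).erase (c, s)).card := by
    rw [← Finset.card_image_of_injOn hinj]
    exact Finset.card_le_card (Finset.image_subset_iff.2 hmaps)
  have := Finset.card_erase_of_mem hmem
  have hpos : 0 < (invSet τ).card := Finset.card_pos.2 ⟨_, hmem⟩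
  omega

private lemma rearrange_lt {n : ℕ} (f : Fin n → ℕ → ℕ) (hpos : ∀ i a, 0 < f i a)
    (hsup : ∀ i j : Fin n, i < j → ∀ a b : ℕ, a < b → f i b * f j a < f i a * f j b) :
    ∀ N (τ : Equiv.Perm (Fin n)), (invSet τ).card ≤ N → τ ≠ 1 →
      ∏ i, f i ((τ i : ℕ)) < ∏ i, f i (i : ℕ) := by
  intro N
  induction N with
  | zero =>
    intro τ hcard hτ
    exact absurd (invSet_empty_eq_one τ (Finset.card_eq_zero.1 (by omega))) hτ
  | succ N ih =>
    intro τ hcard hτ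
    obtain ⟨c, s, hcs, hts⟩ := exists_adj τ hτ
    have hcs' : c < s := by rw [Fin.lt_def]; omega
    set σ := τ * Equiv.swap c s with hσ
    have hσc : σ c = τ s := by rw [hσ, Equiv.Perm.mul_apply, Equiv.swap_apply_left]
    have hσs : σ s = τ c := by rw [hσ, Equiv.Perm.mul_apply, Equiv.swap_apply_right]
    have hσx : ∀ x, x ≠ c → x ≠ s → σ x = τ x := fun x h1 h2 => by
      rw [hσ, Equiv.Perm.mul_apply, Equiv.swap_apply_of_ne_of_ne h1 h2]
    have hprod : ∏ i, f i ((τ i : ℕ)) < ∏ i, f i ((σ i : ℕ)) := by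
      have hsmem : s ∈ Finset.univ.erase c := Finset.mem_erase.2 ⟨hcs'.ne', Finset.mem_univ s⟩
      have expand : ∀ g : Fin n → ℕ,
          ∏ i, g i = g c * (g s * ∏ i ∈ (Finset.univ.erase c).erase s, g i) := by
        intro g
        rw [Finset.mul_prod_erase _ g hsmem, Finset.mul_prod_erase _ g (Finset.mem_univ c)]
      rw [expand (fun i => f i ((τ i : ℕ))), expand (fun i => f i ((σ i : ℕ)))]
      have hPeq : ∏ i ∈ (Finset.univ.erase c).erase s, f i ((σ i : ℕ))
          = ∏ i ∈ (Finset.univ.erase c).erase s, f i ((τ i : ℕ)) := by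
        refine Finset.prod_congr rfl fun x hx => ?_
        rw [Finset.mem_erase, Finset.mem_erase] at hx
        rw [hσx x hx.2.1 hx.1]
      rw [hPeq, hσc, hσs, ← mul_assoc, ← mul_assoc]
      have hP : 0 < ∏ i ∈ (Finset.univ.erase c).erase s, f i ((τ i : ℕ)) :=
        Finset.prod_pos fun x _ => hpos _ _
      exact (Nat.mul_lt_mul_right hP).2 (hsup c s hcs' ((τ s : ℕ)) ((τ c : ℕ)) hts)
    have hcard' : (invSet σ).card < (invSet τ).card := invSet_card_lt τ c s hcs hts
    have hle : ∏ i, f i ((σ i : ℕ)) ≤ ∏ i, f i (i : ℕ) := by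
      by_cases hσ1 : σ = 1
      · rw [hσ1]; simp
      · exact (ih σ (by omega) hσ1).le
    exact lt_of_lt_of_le hprod hle

/-- For `2 ≤ ℓ₁ < ℓ₂ < ... < ℓₙ`, the product `∏ᵢ 2^{τ(i)−1} σ_{ℓᵢ−1}(2^{τ(i)−1})`
over a permutation `τ` of `{1,...,n}` attains its maximum exactly when `τ` is the identity. -/
theorem prod_divisor_perm_max_iff_id (n : ℕ) (ℓ : Fin n → ℕ) (hℓ2 : ∀ i, 2 ≤ ℓ i)
    (hmono : StrictMono ℓ) (τ : Equiv.Perm (Fin n)) :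
    (∏ i : Fin n, 2 ^ (τ i : ℕ) *
        ∑ m ∈ Finset.range ((τ i : ℕ) + 1), 2 ^ ((ℓ i - 1) * m))
      ≤ (∏ i : Fin n, 2 ^ (i : ℕ) *
          ∑ m ∈ Finset.range ((i : ℕ) + 1), 2 ^ ((ℓ i - 1) * m)) ∧
    ((∏ i : Fin n, 2 ^ (τ i : ℕ) *
        ∑ m ∈ Finset.range ((τ i : ℕ) + 1), 2 ^ ((ℓ i - 1) * m))
      = (∏ i : Fin n, 2 ^ (i : ℕ) *
          ∑ m ∈ Finset.range ((i : ℕ) + 1), 2 ^ ((ℓ i - 1) * m)) → τ = 1) := by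
  set f : Fin n → ℕ → ℕ := fun i a => 2 ^ a * Sfun (ℓ i - 1) a with hf
  have hpos : ∀ i a, 0 < f i a := fun i a =>
    Nat.mul_pos (pow_pos (by norm_num) _) (Sfun_pos _ _)
  have hsup : ∀ i j : Fin n, i < j → ∀ a b : ℕ, a < b → f i b * f j a < f i a * f j b := by
    intro i j hij a b hab
    have hkl : ℓ i - 1 < ℓ j - 1 := by
      have h1 := hℓ2 i
      have h2 := hmono hij
      omega
    have hkey := Sfun_supermod (k := ℓ i - 1) (l := ℓ j - 1) hkl hab
    have e1 : f i b * f j a = 2 ^ (a + b) * (Sfun (ℓ i - 1) b * Sfun (ℓ j - 1) a) := by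
      rw [hf]; ring
    have e2 : f i a * f j b = 2 ^ (a + b) * (Sfun (ℓ i - 1) a * Sfun (ℓ j - 1) b) := by
      rw [hf]; ring
    rw [e1, e2]
    exact (Nat.mul_lt_mul_left (pow_pos (by norm_num) _)).2 hkey
  have hmain : τ ≠ 1 → ∏ i, f i ((τ i : ℕ)) < ∏ i, f i (i : ℕ) := fun hτ =>
    rearrange_lt f hpos hsup (invSet τ).card τ le_rfl hτ
  have heqprod : (∏ i : Fin n, 2 ^ (τ i : ℕ) *
      ∑ m ∈ Finset.range ((τ i : ℕ) + 1), 2 ^ ((ℓ i - 1) * m)) = ∏ i, f i ((τ i : ℕ)) := rfl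
  have heqprod2 : (∏ i : Fin n, 2 ^ (i : ℕ) *
      ∑ m ∈ Finset.range ((i : ℕ) + 1), 2 ^ ((ℓ i - 1) * m)) = ∏ i, f i (i : ℕ) := rfl
  rw [heqprod, heqprod2]
  constructor
  · by_cases hτ : τ = 1
    · rw [hτ]; simp
    · exact (hmain hτ).le
  · intro heq
    by_contra hτ
    exact absurd heq (hmain hτ).ne
end

section
/- Let n ≥ 1 and ℓ ≥ 3 be integers, and let z₁,...,zₙ be distinct complex numbers of modulus 1 with pairwise distances |z_j − z_i| ≥ 4/D for some real D > 0. Then the n×n matrix whose (i,j) entry is ∑_{m=0}^{j−1} (z_i 2^{ℓ−1})^m has |determinant| ≥ (2^{ℓ+1}/D)^{n(n−1)/2}. -/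
open Finset Polynomial

theorem Fin.sum_card_Ioi (n : ℕ) : ∑ i : Fin n, #(Ioi i) = n.choose 2 := by
  simp only [Fin.card_Ioi]
  rw [Fin.sum_univ_eq_sum_range (fun i => n - 1 - i), ← sum_range_reflect, Nat.choose_two_right,
    ← sum_range_id]
  exact sum_congr rfl fun i hi => by grind

namespace Polynomial

variable {R : Type*} [CommRing R]

theorem natDegree_geom_sum_X [Nontrivial R] (n : ℕ) :
    (∑ i ∈ range (n + 1), (X : R[X]) ^ i).natDegree = n := by
  refine le_antisymm (natDegree_sum_le_of_forall_le _ _ fun i hi => ?_)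
    (le_natDegree_of_ne_zero ?_)
  · rw [natDegree_X_pow]
    exact Nat.lt_succ_iff.mp (mem_range.mp hi)
  · simp [coeff_X_pow]

end Polynomial

namespace Matrix

variable {R : Type*} [CommRing R] [Nontrivial R] {n : ℕ}

/-- The `j`-th column `∑_{m ≤ j} vᵢ^m` is the `j`-th Vandermonde column plus lower ones. -/
theorem det_geom_sum_eq_det_vandermonde (v : Fin n → R) :
    (of fun i j : Fin n => ∑ m ∈ range ((j : ℕ) + 1), v i ^ m).det = (vandermonde v).det := by
  rw [det_eval_matrixOfPolynomials_eq_det_vandermonde v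
    (fun j => ∑ m ∈ range ((j : ℕ) + 1), X ^ m) (fun j => natDegree_geom_sum_X _)
    (fun j => monic_geom_sum_X j.val.succ_ne_zero)]
  simp [eval_finsetSum]

end Matrix

theorem Matrix.pow_choose_two_le_norm_det_vandermonde {R : Type*} [SeminormedCommRing R]
    [NormMulClass R] [NormOneClass R] {n : ℕ} {c : ℝ} (hc : 0 ≤ c) (v : Fin n → R)
    (h : ∀ i j, i < j → c ≤ ‖v j - v i‖) :
    c ^ n.choose 2 ≤ ‖(vandermonde v).det‖ := by
  rw [det_vandermonde, ← Fin.sum_card_Ioi, ← prod_pow_eq_pow_sum, norm_prod]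
  refine prod_le_prod (fun _ _ => by positivity) fun i _ => ?_
  rw [norm_prod, ← prod_const]
  exact prod_le_prod (fun _ _ => hc) fun j hj => h i j (mem_Ioi.mp hj)

theorem det_geom_sum_matrix_lower_bound_general (n : ℕ) (ℓ : ℕ)
    (D : ℝ) (hD : 0 < D) (z : Fin n → ℂ)
    (hsep : ∀ i j, i ≠ j → 4 / D ≤ ‖z j - z i‖) :
    ((2 : ℝ) ^ (ℓ + 1) / D) ^ (n * (n - 1) / 2)
      ≤ ‖(Matrix.of fun i j : Fin n =>
            ∑ m ∈ Finset.range ((j : ℕ) + 1), (z i * 2 ^ (ℓ - 1)) ^ m).det‖ := by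
  rw [← Nat.choose_two_right, Matrix.det_geom_sum_eq_det_vandermonde]
  refine Matrix.pow_choose_two_le_norm_det_vandermonde (by positivity) _ fun i j hij => ?_
  have h2pow : (2 : ℝ) ^ (ℓ + 1) ≤ 2 ^ (ℓ - 1) * 4 := by
    rw [show (4 : ℝ) = 2 ^ 2 by norm_num, ← pow_add]
    exact pow_le_pow_right₀ one_le_two (by omega)
  calc (2 : ℝ) ^ (ℓ + 1) / D ≤ 2 ^ (ℓ - 1) * (4 / D) := by
        rw [← mul_div_assoc]; gcongr
    _ ≤ 2 ^ (ℓ - 1) * ‖z j - z i‖ := by gcongr; exact hsep i j hij.ne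
    _ = ‖z j * 2 ^ (ℓ - 1) - z i * 2 ^ (ℓ - 1)‖ := by
        rw [← sub_mul, norm_mul, mul_comm, norm_pow, Complex.norm_two]

/-- For unit complex numbers `z₁,...,zₙ` with pairwise distances at least `4/D`,
the matrix with entries `∑_{m=0}^{j−1} (zᵢ 2^{ℓ−1})^m` has
`|det| ≥ (2^{ℓ+1}/D)^{n(n−1)/2}`. -/
theorem det_geom_sum_matrix_lower_bound (n : ℕ) (hn : 1 ≤ n) (ℓ : ℕ) (hℓ : 3 ≤ ℓ)
    (D : ℝ) (hD : 0 < D) (z : Fin n → ℂ) (hz : ∀ i, ‖z i‖ = 1)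
    (hsep : ∀ i j, i ≠ j → 4 / D ≤ ‖z j - z i‖) :
    ((2 : ℝ) ^ (ℓ + 1) / D) ^ (n * (n - 1) / 2)
      ≤ ‖(Matrix.of fun i j : Fin n =>
            ∑ m ∈ Finset.range ((j : ℕ) + 1), (z i * 2 ^ (ℓ - 1)) ^ m).det‖ :=
  det_geom_sum_matrix_lower_bound_general n ℓ D hD z hsep
end

section
/- Let k ≥ ℓ ≥ 2 be integers, D ≥ 1 an odd square-free integer, and χ a primitive Dirichlet character mod D. Writing σ_{k−1,χ}(0) = (k−1)! D^k L(k, χ̄) / ((−2πi)^k G(χ̄)) with G the Gauss sum, we have |σ_{ℓ−1,χ}(0)/σ_{k−1,χ̄}(0)| ≤ 6 ((ℓ−1)/(k−1))^{ℓ−1/2} (2πe/((k−1)D))^{k−ℓ}. -/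
open Real Complex Filter


lemma stirling_lower (n : ℕ) (hn : 1 ≤ n) :
    Real.sqrt (2 * π) * Real.sqrt n * ((n : ℝ) / Real.exp 1) ^ n ≤ n.factorial := by
  obtain ⟨m, rfl⟩ := Nat.exists_eq_add_of_le hn
  set n := 1 + m with hn'
  have hn0 : (0 : ℝ) < n := by positivity
  have hd : (0 : ℝ) < Real.sqrt (2 * n) * ((n : ℝ) / Real.exp 1) ^ n := by positivity
  have hA : Antitone (Stirling.stirlingSeq ∘ Nat.succ) := Stirling.stirlingSeq'_antitone
  have hT : Tendsto (Stirling.stirlingSeq ∘ Nat.succ) atTop (nhds (Real.sqrt π)) := by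
    have := Stirling.tendsto_stirlingSeq_sqrt_pi.comp (tendsto_add_atTop_nat 1)
    simpa [Function.comp_def, Nat.succ_eq_add_one] using this
  have hlow : Real.sqrt π ≤ Stirling.stirlingSeq n := by
    have := hA.le_of_tendsto hT m
    simpa [Function.comp_def, Nat.succ_eq_add_one, hn', Nat.add_comm 1 m] using this
  have hfac : (n.factorial : ℝ) = Stirling.stirlingSeq n *
      (Real.sqrt (2 * n) * ((n : ℝ) / Real.exp 1) ^ n) := by
    rw [Stirling.stirlingSeq, div_mul_cancel₀ _ hd.ne']
  rw [hfac]
  have h2 : Real.sqrt (2 * π) * Real.sqrt n = Real.sqrt π * Real.sqrt (2 * n) := by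
    rw [Real.sqrt_mul (by norm_num), Real.sqrt_mul (by norm_num)]
    ring
  calc Real.sqrt (2 * π) * Real.sqrt n * ((n : ℝ) / Real.exp 1) ^ n
      = Real.sqrt π * (Real.sqrt (2 * n) * ((n : ℝ) / Real.exp 1) ^ n) := by
        rw [h2]; ring
    _ ≤ Stirling.stirlingSeq n * (Real.sqrt (2 * n) * ((n : ℝ) / Real.exp 1) ^ n) :=
        mul_le_mul_of_nonneg_right hlow hd.le

lemma stirling_upper (n : ℕ) (hn : 1 ≤ n) :
    (n.factorial : ℝ) ≤ Real.exp 1 * Real.sqrt n * ((n : ℝ) / Real.exp 1) ^ n := by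
  obtain ⟨m, rfl⟩ := Nat.exists_eq_add_of_le hn
  set n := 1 + m with hn'
  have hn0 : (0 : ℝ) < n := by positivity
  have hd : (0 : ℝ) < Real.sqrt (2 * n) * ((n : ℝ) / Real.exp 1) ^ n := by positivity
  have hA : Antitone (Stirling.stirlingSeq ∘ Nat.succ) := Stirling.stirlingSeq'_antitone
  have hup : Stirling.stirlingSeq n ≤ Real.exp 1 / Real.sqrt 2 := by
    have := hA (Nat.zero_le m)
    simpa [Function.comp_def, Nat.succ_eq_add_one, hn', Nat.add_comm 1 m,
      Stirling.stirlingSeq_one] using this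
  have hfac : (n.factorial : ℝ) = Stirling.stirlingSeq n *
      (Real.sqrt (2 * n) * ((n : ℝ) / Real.exp 1) ^ n) := by
    rw [Stirling.stirlingSeq, div_mul_cancel₀ _ hd.ne']
  rw [hfac]
  have h2 : Real.exp 1 / Real.sqrt 2 * Real.sqrt (2 * n) = Real.exp 1 * Real.sqrt n := by
    rw [Real.sqrt_mul (by norm_num)]
    rw [div_mul_eq_mul_div, mul_comm (Real.sqrt 2)]
    field_simp
  calc Stirling.stirlingSeq n * (Real.sqrt (2 * n) * ((n : ℝ) / Real.exp 1) ^ n)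
      ≤ Real.exp 1 / Real.sqrt 2 * (Real.sqrt (2 * n) * ((n : ℝ) / Real.exp 1) ^ n) :=
        mul_le_mul_of_nonneg_right hup hd.le
    _ = Real.exp 1 * Real.sqrt n * ((n : ℝ) / Real.exp 1) ^ n := by rw [← mul_assoc, h2]

lemma numeric_const : 5 * Real.exp 1 ≤ 6 * Real.sqrt (2 * π) := by
  have h6 : (2.449 : ℝ) ≤ Real.sqrt 6 := by
    rw [show (6:ℝ) = 2.449^2 + 0.002399 by norm_num]
    nlinarith [Real.sq_sqrt (by norm_num : (0:ℝ) ≤ 2.449^2 + 0.002399),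
      Real.sqrt_nonneg ((2.449:ℝ)^2 + 0.002399)]
  have hmono : Real.sqrt 6 ≤ Real.sqrt (2 * π) := by
    apply Real.sqrt_le_sqrt
    nlinarith [Real.pi_gt_three]
  nlinarith [Real.exp_one_lt_d9]


lemma telescope_hasSum :
    HasSum (fun n : ℕ => 1 / ((n : ℝ) + 3/2) - 1 / ((n : ℝ) + 5/2)) (2/3) := by
  have hF : Tendsto (fun n : ℕ => 1 / ((n : ℝ) + 3/2)) atTop (nhds 0) := by
    have h : Tendsto (fun n : ℕ => ((n : ℝ) + 3/2)) atTop atTop :=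
      tendsto_atTop_add_const_right _ _ tendsto_natCast_atTop_atTop
    have h2 := tendsto_inv_atTop_zero.comp h
    simpa [one_div, Function.comp_def] using h2
  have hnn : ∀ i : ℕ, 0 ≤ 1 / ((i : ℝ) + 3/2) - 1 / ((i : ℝ) + 5/2) := by
    intro i
    have h1 : (0:ℝ) < (i : ℝ) + 3/2 := by positivity
    have h2 : ((i : ℝ) + 3/2) ≤ (i : ℝ) + 5/2 := by linarith
    have := one_div_le_one_div_of_le h1 h2
    linarith
  rw [hasSum_iff_tendsto_nat_of_nonneg hnn]
  have hps : ∀ n : ℕ, ∑ i ∈ Finset.range n, (1 / ((i : ℝ) + 3/2) - 1 / ((i : ℝ) + 5/2))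
      = 1 / ((0 : ℝ) + 3/2) - 1 / ((n : ℝ) + 3/2) := by
    intro n
    calc ∑ i ∈ Finset.range n, (1 / ((i : ℝ) + 3/2) - 1 / ((i : ℝ) + 5/2))
        = ∑ i ∈ Finset.range n, (1 / ((i : ℝ) + 3/2) - 1 / (((i+1 : ℕ) : ℝ) + 3/2)) := by
          refine Finset.sum_congr rfl fun i _ => ?_
          push_cast
          ring_nf
      _ = 1 / (((0:ℕ) : ℝ) + 3/2) - 1 / ((n : ℝ) + 3/2) :=
          Finset.sum_range_sub' (fun i : ℕ => 1 / ((i : ℝ) + 3/2)) n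
      _ = 1 / ((0 : ℝ) + 3/2) - 1 / ((n : ℝ) + 3/2) := by norm_num
  simp only [hps]
  have : Tendsto (fun n : ℕ => 1 / ((0 : ℝ) + 3/2) - 1 / ((n : ℝ) + 3/2)) atTop
      (nhds (1 / ((0 : ℝ) + 3/2) - 0)) := (tendsto_const_nhds).sub hF
  convert this using 2
  norm_num

lemma L_bounds (k : ℕ) (hk : 2 ≤ k) (f : ℕ → ℂ) (hf : ∀ n, ‖f n‖ ≤ 1) (hf1 : f 1 = 1) :
    ‖∑' n : ℕ+, f (n : ℕ) / ((n : ℕ) : ℂ) ^ k‖ ≤ 5/3 ∧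
    (1 : ℝ)/3 ≤ ‖∑' n : ℕ+, f (n : ℕ) / ((n : ℕ) : ℂ) ^ k‖ := by
  set H : ℕ → ℂ := fun n => f n / (n : ℂ) ^ k with hH
  have hH0 : H 0 = 0 := by simp [hH, zero_pow (by omega : k ≠ 0)]
  have hH1 : H 1 = 1 := by simp [hH, hf1]
  have hbound : ∀ n : ℕ, ‖H n‖ ≤ 1 / ((n : ℝ))^2 := by
    intro n
    match n with
    | 0 => simp [hH0]
    | (m+1) =>
      have hn1 : (1:ℝ) ≤ ((m+1 : ℕ) : ℝ) := by exact_mod_cast Nat.one_le_iff_ne_zero.mpr (by omega)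
      have hpos : (0:ℝ) < ((m+1 : ℕ) : ℝ) ^ k := by positivity
      have heq : ‖H (m+1)‖ = ‖f (m+1)‖ / ((m+1 : ℕ) : ℝ) ^ k := by
        rw [hH]
        simp only [norm_div, norm_pow, Complex.norm_natCast]
      rw [heq]
      calc ‖f (m+1)‖ / ((m+1 : ℕ) : ℝ) ^ k ≤ 1 / ((m+1 : ℕ) : ℝ) ^ k := by
            gcongr
            exact hf _
        _ ≤ 1 / ((m+1 : ℕ) : ℝ) ^ 2 := by
            apply one_div_le_one_div_of_le (by positivity)
            exact pow_le_pow_right₀ hn1 hk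
  have hsum : Summable H := by
    apply Summable.of_norm_bounded ?_ hbound
    simpa using summable_one_div_nat_pow.mpr (by norm_num : 1 < 2)
  have hEq : ∑' n : ℕ+, H (n : ℕ) = ∑' n : ℕ, H n := by
    apply Function.Injective.tsum_eq (fun a b h => PNat.coe_injective h)
    intro n hn
    match n with
    | 0 => exact absurd hH0 hn
    | (m+1) => exact ⟨⟨m+1, Nat.succ_pos m⟩, rfl⟩
  have hsum1 : Summable (fun n => H (n + 1)) := by rwa [summable_nat_add_iff]
  have hsum2 : Summable (fun n => H (n + 2)) := (summable_nat_add_iff 2).mpr hsum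
  have hsplit : ∑' n : ℕ, H n = 1 + ∑' n : ℕ, H (n + 2) := by
    rw [Summable.tsum_eq_zero_add hsum, hH0, zero_add, Summable.tsum_eq_zero_add hsum1, hH1]
  have hT : ‖∑' n : ℕ, H (n + 2)‖ ≤ 2/3 := by
    apply tsum_of_norm_bounded telescope_hasSum
    intro i
    refine (hbound (i + 2)).trans ?_
    have h1 : (0:ℝ) < (i : ℝ) + 3/2 := by positivity
    have h2 : (0:ℝ) < (i : ℝ) + 5/2 := by positivity
    have heq : 1 / ((i : ℝ) + 3/2) - 1 / ((i : ℝ) + 5/2)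
        = 1 / (((i : ℝ) + 3/2) * ((i : ℝ) + 5/2)) := by
      field_simp
      ring
    rw [heq]
    apply one_div_le_one_div_of_le (by positivity)
    push_cast
    nlinarith [sq_nonneg ((i:ℝ))]
  constructor
  · rw [hEq, hsplit]
    calc ‖1 + ∑' n : ℕ, H (n + 2)‖ ≤ ‖(1:ℂ)‖ + ‖∑' n : ℕ, H (n + 2)‖ := norm_add_le _ _
      _ ≤ 1 + 2/3 := by rw [norm_one]; linarith
      _ = 5/3 := by norm_num
  · rw [hEq, hsplit]
    have h1 := norm_sub_norm_le (1:ℂ) (-(∑' n : ℕ, H (n + 2)))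
    rw [sub_neg_eq_add, norm_neg, norm_one] at h1
    linarith


/-- The Gauss sum `G(f) = ∑_{a mod D} f(a) e^{2πia/D}`. -/
noncomputable def gaussSumOf (D : ℕ) (f : ℕ → ℂ) : ℂ :=
  ∑ a ∈ Finset.range D, f a * Complex.exp (2 * (π : ℂ) * Complex.I * a / D)

/-- The constant term `σ_{k−1}(0) = (k−1)! D^k L(k,f) / ((−2πi)^k G(f))`, where `f` is
meant to be the conjugate character `χ̄` when this represents `σ_{k−1,χ}(0)`. -/
noncomputable def sigmaZero (D k : ℕ) (f : ℕ → ℂ) : ℂ :=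
  ((k - 1).factorial : ℂ) * (D : ℂ) ^ k * (∑' n : ℕ+, f (n : ℕ) / ((n : ℕ) : ℂ) ^ k)
    / ((-(2 * (π : ℂ) * Complex.I)) ^ k * gaussSumOf D f)



lemma gaussSumOf_eq (D : ℕ) [NeZero D] (g : ZMod D → ℂ) :
    gaussSumOf D (fun m => g ((m : ℕ) : ZMod D)) = ∑ a : ZMod D, g a * ZMod.stdAddChar a := by
  rw [gaussSumOf]
  refine Finset.sum_nbij' (fun a => ((a : ℕ) : ZMod D)) (fun b => b.val) ?_ ?_ ?_ ?_ ?_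
  · intro a _; exact Finset.mem_univ _
  · intro b _; exact Finset.mem_range.mpr (ZMod.val_lt b)
  · intro a ha; exact ZMod.val_cast_of_lt (Finset.mem_range.mp ha)
  · intro b _; exact ZMod.natCast_zmod_val b
  · intro a _
    congr 1
    have h := ZMod.stdAddChar_coe (N := D) (a : ℤ)
    push_cast at h
    rw [h]

lemma norm_gaussSum {D : ℕ} [NeZero D] (χ : DirichletCharacter ℂ D) (hχ : χ.IsPrimitive) :
    ‖gaussSum χ ZMod.stdAddChar‖ = Real.sqrt D ∧
    ‖gaussSum χ⁻¹ ZMod.stdAddChar‖ = Real.sqrt D := by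
  set ψ := (ZMod.stdAddChar (N := D)) with hψ
  have hconjψ : ∀ a : ZMod D, (starRingEnd ℂ) (ψ a) = ψ (-a) := by
    intro a
    have hmul : ψ a * ψ (-a) = 1 := by
      rw [← AddChar.map_add_eq_mul, add_neg_cancel, AddChar.map_zero_eq_one]
    have hnorm : ‖ψ a‖ = 1 := by
      rw [hψ, ZMod.stdAddChar_apply]
      exact Circle.norm_coe _
    have hne : ψ a ≠ 0 := by
      intro h0
      rw [h0, norm_zero] at hnorm
      norm_num at hnorm
    have hinv : (ψ a)⁻¹ = ψ (-a) := inv_eq_of_mul_eq_one_right hmul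
    rw [← hinv, Complex.inv_eq_conj hnorm]
  have hstar : ∀ a : ZMod D, (starRingEnd ℂ) (χ a) = χ⁻¹ a := by
    intro a
    exact MulChar.star_apply' χ a
  have hconjG : (starRingEnd ℂ) (gaussSum χ ψ) = χ⁻¹ (-1) * gaussSum χ⁻¹ ψ := by
    rw [gaussSum, map_sum, gaussSum, Finset.mul_sum]
    apply Fintype.sum_equiv (Equiv.neg (ZMod D))
    intro a
    show (starRingEnd ℂ) (χ a * ψ a) = χ⁻¹ (-1) * (χ⁻¹ (-a) * ψ (-a))
    rw [map_mul, hstar a, hconjψ a, ← mul_assoc, ← map_mul]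
    norm_num
  have key : gaussSum χ⁻¹ ψ * gaussSum χ ψ = (D : ℂ) * χ (-1) := by
    have h1 : ZMod.dft (⇑χ) = fun k => χ⁻¹ (-k) * gaussSum χ ψ :=
      funext (hχ.fourierTransform_eq_inv_mul_gaussSum)
    have h2 := ZMod.dft_dft (⇑χ)
    rw [h1] at h2
    have h2' := congrFun h2 1
    rw [congrFun (ZMod.dft_mul_const (fun k => χ⁻¹ (-k)) (gaussSum χ ψ)) 1] at h2'
    have h4 := congrFun (ZMod.dft_comp_neg (⇑χ⁻¹)) 1
    rw [show (ZMod.dft fun k : ZMod D => χ⁻¹ (-k)) 1 = ZMod.dft (⇑χ⁻¹) (-1) from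
      congrFun (ZMod.dft_comp_neg (⇑χ⁻¹)) 1] at h2'
    rw [DirichletCharacter.fourierTransform_eq_gaussSum_mulShift χ⁻¹ (-1), neg_neg,
      AddChar.mulShift_one] at h2'
    rw [h2']
    rw [smul_eq_mul]
  have hx1 : ‖χ (-1 : ZMod D)‖ = 1 := by
    have := DirichletCharacter.unit_norm_eq_one χ (-1)
    simpa using this
  have hx2 : ‖χ⁻¹ (-1 : ZMod D)‖ = 1 := by
    have := DirichletCharacter.unit_norm_eq_one χ⁻¹ (-1)
    simpa using this
  have hGG' : ‖gaussSum χ ψ‖ = ‖gaussSum χ⁻¹ ψ‖ := by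
    have := congrArg norm hconjG
    rwa [RCLike.norm_conj, norm_mul, hx2, one_mul] at this
  have hprod : ‖gaussSum χ ψ‖ * ‖gaussSum χ ψ‖ = D := by
    have := congrArg norm key
    rw [norm_mul, norm_mul, hx1, mul_one, Complex.norm_natCast, ← hGG'] at this
    linarith [this]
  have hfin : ‖gaussSum χ ψ‖ = Real.sqrt D := by
    rw [← Real.sqrt_mul_self (norm_nonneg (gaussSum χ ψ)), hprod]
  exact ⟨hfin, hGG' ▸ hfin⟩



lemma norm_neg_two_pi_I : ‖-(2 * (π : ℂ) * Complex.I)‖ = 2 * π := by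
  have h1 : (2 * (π:ℂ)) = ((2*π : ℝ) : ℂ) := by push_cast; ring
  rw [norm_neg, norm_mul, h1, Complex.norm_real, Complex.norm_I, mul_one, Real.norm_eq_abs,
    _root_.abs_of_nonneg (by positivity)]

lemma norm_sigmaZero (D k : ℕ) (f : ℕ → ℂ) :
    ‖sigmaZero D k f‖ = ((k-1).factorial : ℝ) * (D:ℝ)^k *
      ‖∑' n : ℕ+, f (n : ℕ) / ((n : ℕ) : ℂ) ^ k‖ / ((2*π)^k * ‖gaussSumOf D f‖) := by
  rw [sigmaZero, norm_div]
  congr 1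
  · rw [norm_mul, norm_mul, Complex.norm_natCast, norm_pow, Complex.norm_natCast]
  · rw [norm_mul, norm_pow, norm_neg_two_pi_I]


lemma div_div_div_helper (x u y v : ℝ) : (x/u)/(y/v) = x*v/(y*u) := by
  simp only [div_eq_mul_inv, mul_inv, inv_inv]
  ring

/-- For `k ≥ ℓ ≥ 2`, `D ≥ 1` odd square-free and `χ` primitive mod `D`,
`|σ_{ℓ−1,χ}(0)/σ_{k−1,χ̄}(0)| ≤ 6 ((ℓ−1)/(k−1))^{ℓ−1/2} (2πe/((k−1)D))^{k−ℓ}`. -/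
theorem sigma_zero_quotient_bound (k ℓ D : ℕ) (hℓ : 2 ≤ ℓ) (hlk : ℓ ≤ k)
    (hD : 1 ≤ D) (hodd : Odd D) (hsf : Squarefree D)
    (χ : DirichletCharacter ℂ D) (hprim : χ.IsPrimitive) :
    ‖sigmaZero D ℓ (fun m => (starRingEnd ℂ) (χ ((m : ℕ) : ZMod D)))
        / sigmaZero D k (fun m => χ ((m : ℕ) : ZMod D))‖
      ≤ 6 * ((((ℓ : ℝ) - 1) / ((k : ℝ) - 1)) ^ ((ℓ : ℝ) - 1 / 2))
          * (2 * π * Real.exp 1 / (((k : ℝ) - 1) * D)) ^ (k - ℓ) := by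
  haveI : NeZero D := ⟨by omega⟩
  have hk2 : 2 ≤ k := le_trans hℓ hlk
  -- rewrite conjugate character as inverse
  have hfℓ : (fun m : ℕ => (starRingEnd ℂ) (χ ((m : ℕ) : ZMod D)))
      = fun m : ℕ => χ⁻¹ ((m : ℕ) : ZMod D) := by
    funext m
    exact MulChar.star_apply' χ _
  rw [hfℓ]
  -- Gauss sum norms
  obtain ⟨hG, hG'⟩ := norm_gaussSum χ hprim
  have hGoℓ : ‖gaussSumOf D (fun m : ℕ => χ⁻¹ ((m : ℕ) : ZMod D))‖ = Real.sqrt D := by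
    rw [show gaussSumOf D (fun m : ℕ => χ⁻¹ ((m : ℕ) : ZMod D))
        = gaussSum χ⁻¹ ZMod.stdAddChar from gaussSumOf_eq D ⇑χ⁻¹]
    exact hG'
  have hGok : ‖gaussSumOf D (fun m : ℕ => χ ((m : ℕ) : ZMod D))‖ = Real.sqrt D := by
    rw [show gaussSumOf D (fun m : ℕ => χ ((m : ℕ) : ZMod D))
        = gaussSum χ ZMod.stdAddChar from gaussSumOf_eq D ⇑χ]
    exact hG
  -- L-value bounds
  have hLℓ := L_bounds ℓ hℓ (fun m : ℕ => χ⁻¹ ((m : ℕ) : ZMod D))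
    (fun n => DirichletCharacter.norm_le_one χ⁻¹ _) (by simp)
  have hLk := L_bounds k hk2 (fun m : ℕ => χ ((m : ℕ) : ZMod D))
    (fun n => DirichletCharacter.norm_le_one χ _) (by simp)
  set Lℓ := ‖∑' n : ℕ+, (fun m : ℕ => χ⁻¹ ((m : ℕ) : ZMod D)) (n : ℕ) / ((n : ℕ) : ℂ) ^ ℓ‖
  set Lk := ‖∑' n : ℕ+, (fun m : ℕ => χ ((m : ℕ) : ZMod D)) (n : ℕ) / ((n : ℕ) : ℂ) ^ k‖
  obtain ⟨hLℓ_up, hLℓ_lo⟩ := hLℓ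
  obtain ⟨hLk_up, hLk_lo⟩ := hLk
  -- abbreviations
  set a := ℓ - 1 with ha
  set b := k - 1 with hb
  set q := k - ℓ with hq
  have hbaq : b = a + q := by omega
  have hkq : k = ℓ + q := by omega
  have ha1 : 1 ≤ a := by omega
  have hb1 : 1 ≤ b := by omega
  set A := (a : ℝ) with hA
  set B := (b : ℝ) with hB
  have hA1 : (1:ℝ) ≤ A := by rw [hA]; exact_mod_cast ha1
  have hB1 : (1:ℝ) ≤ B := by rw [hB]; exact_mod_cast hb1
  have hDr1 : (1:ℝ) ≤ (D:ℝ) := by exact_mod_cast hD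
  have hDr0 : (0:ℝ) < (D:ℝ) := by linarith
  have hs : (0:ℝ) < Real.sqrt D := Real.sqrt_pos.mpr hDr0
  have he : (0:ℝ) < Real.exp 1 := Real.exp_pos 1
  have hpi : (0:ℝ) < π := Real.pi_pos
  have hsqrt2pi : (0:ℝ) < Real.sqrt (2*π) := Real.sqrt_pos.mpr (by positivity)
  -- norms of the two sigmaZero values
  rw [norm_div, norm_sigmaZero, norm_sigmaZero, hGoℓ, hGok]
  rw [show ℓ - 1 = a from rfl, show k - 1 = b from rfl]
  set Fa := (a.factorial : ℝ) with hFa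
  set Fb := (b.factorial : ℝ) with hFb
  have hFa0 : (0:ℝ) < Fa := by rw [hFa]; exact_mod_cast a.factorial_pos
  have hFb0 : (0:ℝ) < Fb := by rw [hFb]; exact_mod_cast b.factorial_pos
  -- step 1: clean quotient
  have step1 : (Fa * (D:ℝ)^ℓ * Lℓ / ((2*π)^ℓ * Real.sqrt D))
      / (Fb * (D:ℝ)^k * Lk / ((2*π)^k * Real.sqrt D))
      = (Fa * (D:ℝ)^ℓ * Lℓ * (2*π)^k) / (Fb * (D:ℝ)^k * Lk * (2*π)^ℓ) := by
    rw [div_div_div_helper]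
    rw [show Fa * (D:ℝ)^ℓ * Lℓ * ((2*π)^k * Real.sqrt D)
        = (Fa * (D:ℝ)^ℓ * Lℓ * (2*π)^k) * Real.sqrt D from by ring,
      show Fb * (D:ℝ)^k * Lk * ((2*π)^ℓ * Real.sqrt D)
        = (Fb * (D:ℝ)^k * Lk * (2*π)^ℓ) * Real.sqrt D from by ring,
      mul_div_mul_right _ _ hs.ne']
  rw [step1]
  have hLk0 : (0:ℝ) < Lk := by linarith
  -- step 2: bound the L-values
  have step2 : (Fa * (D:ℝ)^ℓ * Lℓ * (2*π)^k) / (Fb * (D:ℝ)^k * Lk * (2*π)^ℓ)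
      ≤ (Fa * (D:ℝ)^ℓ * (5/3) * (2*π)^k) / (Fb * (D:ℝ)^k * (1/3) * (2*π)^ℓ) := by
    apply div_le_div₀ (by positivity) ?_ (by positivity) ?_
    · gcongr
    · gcongr
  -- step 3: rewrite as factorial ratio times power
  have step3 : (Fa * (D:ℝ)^ℓ * (5/3) * (2*π)^k) / (Fb * (D:ℝ)^k * (1/3) * (2*π)^ℓ)
      = 5 * (Fa / Fb) * ((2*π) / (D:ℝ))^q := by
    have e1 : (D:ℝ)^k = (D:ℝ)^ℓ * (D:ℝ)^q := by rw [← pow_add, ← hkq]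
    have e2 : (2*π:ℝ)^k = (2*π)^ℓ * (2*π)^q := by rw [← pow_add, ← hkq]
    rw [e1, e2, div_pow]
    field_simp
  -- step 4: Stirling bound on factorial ratio
  have hfr : Fa / Fb ≤ (Real.exp 1 / Real.sqrt (2*π)) * ((A/B)^a * Real.sqrt (A/B))
      * (Real.exp 1 / B)^q := by
    have hup := stirling_upper a ha1
    have hlo := stirling_lower b hb1
    have h1 : Fa / Fb ≤ (Real.exp 1 * Real.sqrt A * (A / Real.exp 1)^a)
        / (Real.sqrt (2*π) * Real.sqrt B * (B / Real.exp 1)^b) := by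
      apply div_le_div₀ (by positivity) hup (by positivity) hlo
    refine h1.trans_eq ?_
    have hB0 : (0:ℝ) < B := by linarith
    have hA0 : (0:ℝ) < A := by linarith
    have e3 : (B / Real.exp 1)^b = (B / Real.exp 1)^a * (B / Real.exp 1)^q := by
      rw [← pow_add, ← hbaq]
    have e4 : Real.sqrt (A/B) = Real.sqrt A / Real.sqrt B := Real.sqrt_div hA0.le B
    rw [e3, e4, div_pow, div_pow, div_pow, div_pow]
    have n1 : Real.sqrt (2*π) ≠ 0 := hsqrt2pi.ne'
    have n2 : Real.sqrt B ≠ 0 := (Real.sqrt_pos.mpr hB0).ne'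
    have n3 : Real.exp 1 ≠ 0 := he.ne'
    have n4 : B ≠ 0 := hB0.ne'
    field_simp
    ring_nf
    rw [mul_assoc, ← mul_pow, mul_inv_cancel₀ n4, one_pow, mul_one]
  -- step 5
  have step5 : 5 * (Fa / Fb) * ((2*π) / (D:ℝ))^q
      ≤ 5 * ((Real.exp 1 / Real.sqrt (2*π)) * ((A/B)^a * Real.sqrt (A/B))
          * (Real.exp 1 / B)^q) * ((2*π) / (D:ℝ))^q := by
    apply mul_le_mul_of_nonneg_right (mul_le_mul_of_nonneg_left hfr (by norm_num))
      (by positivity)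
  -- step 6 : combine powers
  have hB0 : (0:ℝ) < B := by linarith
  have step6 : 5 * ((Real.exp 1 / Real.sqrt (2*π)) * ((A/B)^a * Real.sqrt (A/B))
          * (Real.exp 1 / B)^q) * ((2*π) / (D:ℝ))^q
      = (5 * Real.exp 1 / Real.sqrt (2*π)) * ((A/B)^a * Real.sqrt (A/B))
          * (2 * π * Real.exp 1 / (B * (D:ℝ)))^q := by
    have e5 : (Real.exp 1 / B)^q * ((2*π) / (D:ℝ))^q
        = (2 * π * Real.exp 1 / (B * (D:ℝ)))^q := by
      rw [← mul_pow]
      congr 1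
      field_simp
    rw [← e5]
    ring
  -- step 7 : numeric constant
  have step7 : (5 * Real.exp 1 / Real.sqrt (2*π)) * ((A/B)^a * Real.sqrt (A/B))
          * (2 * π * Real.exp 1 / (B * (D:ℝ)))^q
      ≤ 6 * ((A/B)^a * Real.sqrt (A/B)) * (2 * π * Real.exp 1 / (B * (D:ℝ)))^q := by
    have hconst : 5 * Real.exp 1 / Real.sqrt (2*π) ≤ 6 := by
      rw [div_le_iff₀ hsqrt2pi]
      linarith [numeric_const]
    apply mul_le_mul_of_nonneg_right (mul_le_mul_of_nonneg_right hconst (by positivity))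
      (by positivity)
  -- identify the right-hand side
  have hcastA : ((ℓ : ℝ) - 1) = A := by
    rw [hA, ha]
    push_cast [Nat.cast_sub (by omega : 1 ≤ ℓ)]
    ring
  have hcastB : ((k : ℝ) - 1) = B := by
    rw [hB, hb]
    push_cast [Nat.cast_sub (by omega : 1 ≤ k)]
    ring
  have hrpow : (((ℓ : ℝ) - 1) / ((k : ℝ) - 1)) ^ ((ℓ : ℝ) - 1 / 2)
      = (A/B)^a * Real.sqrt (A/B) := by
    rw [hcastA, hcastB]
    have hx : (0:ℝ) < A / B := by positivity
    have hexp : (ℓ : ℝ) - 1 / 2 = (a : ℝ) + 1 / 2 := by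
      rw [hA] at hcastA
      have : (a : ℝ) = (ℓ : ℝ) - 1 := hcastA.symm
      rw [this]
      ring
    rw [hexp, Real.rpow_add hx, Real.rpow_natCast, Real.sqrt_eq_rpow]
  have hfinal : 6 * ((((ℓ : ℝ) - 1) / ((k : ℝ) - 1)) ^ ((ℓ : ℝ) - 1 / 2))
          * (2 * π * Real.exp 1 / (((k : ℝ) - 1) * D)) ^ (k - ℓ)
      = 6 * ((A/B)^a * Real.sqrt (A/B)) * (2 * π * Real.exp 1 / (B * (D:ℝ)))^q := by
    rw [hrpow, hcastB]
  rw [hfinal]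
  calc (Fa * (D:ℝ)^ℓ * Lℓ * (2*π)^k) / (Fb * (D:ℝ)^k * Lk * (2*π)^ℓ)
      ≤ (Fa * (D:ℝ)^ℓ * (5/3) * (2*π)^k) / (Fb * (D:ℝ)^k * (1/3) * (2*π)^ℓ) := step2
    _ = 5 * (Fa / Fb) * ((2*π) / (D:ℝ))^q := step3
    _ ≤ 5 * ((Real.exp 1 / Real.sqrt (2*π)) * ((A/B)^a * Real.sqrt (A/B))
          * (Real.exp 1 / B)^q) * ((2*π) / (D:ℝ))^q := step5
    _ = (5 * Real.exp 1 / Real.sqrt (2*π)) * ((A/B)^a * Real.sqrt (A/B))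
          * (2 * π * Real.exp 1 / (B * (D:ℝ)))^q := step6
    _ ≤ 6 * ((A/B)^a * Real.sqrt (A/B)) * (2 * π * Real.exp 1 / (B * (D:ℝ)))^q := step7
end
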